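/- The slot structure 𝕊 satisfies every query γ_i, and every homomorphism witnessing γ_i in 𝕊 maps the distinguished variable to b: for each 1 ≤ i ≤ k there exist vertices x, y, y' of 𝕊 with y ≠ y', x →^{l_i} y, and x →^{r_i} y', and for every such triple, x = b. -/

import Mathlib

/-- The smallest equivalence relation on words over `α` generated by
`w ++ lᵢ ++ v ≃ w ++ rᵢ ++ v` for pairs `(lᵢ, rᵢ) ∈ P`. -/
def ThueEq {α : Type} (P : List (List α × List α)) : List α → List α → Prop :=
  Relation.EqvGen (fun u v => ∃ x y p, p ∈ P ∧ u = x ++ p.1 ++ y ∧ v = x ++ p.2 ++ y)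

/-- `LPath E w s t`: there is a path from `s` to `t` whose edges are labeled by the word `w`. -/
def LPath {α V : Type} (E : α → V → V → Prop) : List α → V → V → Prop
  | [] => fun s t => s = t
  | R :: w => fun s t => ∃ u, E R s u ∧ LPath E w u t

/-- The two vertices `b`, `c` of the slot structure 𝕊. -/
inductive Slot : Type | b | c
deriving DecidableEq

/-- Edges of 𝕊 : for each `R`, `R(b,b)`, `R(b,c)`, `R(c,c)` hold and `R(c,b)` does not. -/
def SEdge {α : Type} (_ : α) (s t : Slot) : Prop := ¬(s = Slot.c ∧ t = Slot.b)

/-- Predicate `A` of 𝕊 : holds exactly at `b`. -/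
def SA (s : Slot) : Prop := s = Slot.b

namespace LPath

variable {α V : Type} {E : α → V → V → Prop}

theorem of_loop {s : V} (hs : ∀ R, E R s s) : ∀ w : List α, LPath E w s s
  | [] => rfl
  | _ :: w => ⟨s, hs _, of_loop hs w⟩

theorem of_loop_of_edge {s t : V} (hs : ∀ R, E R s s) (hst : ∀ R, E R s t) :
    ∀ w : List α, w ≠ [] → LPath E w s t
  | [], hw => absurd rfl hw
  | [_], _ => ⟨t, hst _, rfl⟩
  | _ :: R :: w, _ => ⟨s, hs _, of_loop_of_edge hs hst (R :: w) (List.cons_ne_nil _ _)⟩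

theorem mem_of_mem_of_closed {S : Set V} (hS : ∀ R u v, u ∈ S → E R u v → v ∈ S) :
    ∀ {w : List α} {s t : V}, LPath E w s t → s ∈ S → t ∈ S
  | [], _, _, rfl, hs => hs
  | _ :: _, _, _, ⟨_, hsu, hut⟩, hs => mem_of_mem_of_closed hS hut (hS _ _ _ hs hsu)

end LPath

theorem slot_lpath_b_b {α : Type} (w : List α) : LPath (SEdge (α := α)) w Slot.b Slot.b :=
  LPath.of_loop (fun _ => by simp [SEdge]) w

theorem slot_lpath_b_c {α : Type} {w : List α} (hw : w ≠ []) :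
    LPath (SEdge (α := α)) w Slot.b Slot.c :=
  LPath.of_loop_of_edge (fun _ => by simp [SEdge]) (fun _ => by simp [SEdge]) w hw

/-- No edge of 𝕊 leaves `c`, so `c` is the endpoint of every path starting there. -/
theorem eq_c_of_slot_lpath_c {α : Type} {w : List α} {t : Slot}
    (h : LPath (SEdge (α := α)) w Slot.c t) : t = Slot.c :=
  LPath.mem_of_mem_of_closed (S := {Slot.c}) (fun _ u v hu huv => by
    rw [Set.mem_singleton_iff] at hu ⊢
    subst hu
    cases v
    · exact absurd ⟨rfl, rfl⟩ huv
    · rfl) h rfl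

theorem slot_satisfies_gamma_general {α : Type} (P : List (List α × List α))
    (hP : ∀ p ∈ P, p.1 ≠ [] ∧ p.2 ≠ []) :
    ∀ p ∈ P,
      (∃ x y y' : Slot, y ≠ y' ∧ LPath (SEdge (α := α)) p.1 x y ∧ LPath (SEdge (α := α)) p.2 x y') ∧
      (∀ x y y' : Slot, y ≠ y' → LPath (SEdge (α := α)) p.1 x y →
        LPath (SEdge (α := α)) p.2 x y' → x = Slot.b) := by
  intro p hp
  refine ⟨⟨Slot.b, Slot.b, Slot.c, by simp, slot_lpath_b_b _, slot_lpath_b_c (hP p hp).2⟩, ?_⟩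
  intro x y y' hne h₁ h₂
  cases x with
  | b => rfl
  | c => exact absurd ((eq_c_of_slot_lpath_c h₁).trans (eq_c_of_slot_lpath_c h₂).symm) hne

theorem slot_satisfies_gamma {α : Type} [Fintype α] (P : List (List α × List α))
    (hP : ∀ p ∈ P, p.1 ≠ [] ∧ p.2 ≠ []) :
    ∀ p ∈ P,
      (∃ x y y' : Slot, y ≠ y' ∧ LPath (SEdge (α := α)) p.1 x y ∧ LPath (SEdge (α := α)) p.2 x y') ∧
      (∀ x y y' : Slot, y ≠ y' → LPath (SEdge (α := α)) p.1 x y →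
        LPath (SEdge (α := α)) p.2 x y' → x = Slot.b) :=
  slot_satisfies_gamma_general P hP
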